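/- Let K be an algebraically closed field and F = K(x). Let S be a finite-dimensional K-subspace of F of dimension n, let v be one of the valuations v_α (α ∈ K) or v_∞, and let S_1 ⊂ … ⊂ S_n be the natural filtration of S with respect to v, with combinatorial genii γ_i and minimal divisors D_i. Suppose 2 ≤ i ≤ n − 1 and γ_{i+1} = γ_i. Then S_i² = S_{i−1}·S_{i+1}, and for every place P of F one has D_{i+1}(P) − D_i(P) = D_i(P) − D_{i−1}(P). -/

import Mathlib

/-!
Write `w_j = v(e_j)`, a strictly decreasing sequence. The square `S_{i+1}²` contains
`S_i² + K e_i e_{i+1} + K e_{i+1}²`, and the two new products have distinct valuations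
`w_i + w_{i+1} > 2 w_{i+1}`, both below `2 w_i ≤ v(S_i²)`; so `γ_{i+1} = γ_i`, which says
`dim S_{i+1}² = dim S_i² + 2`, forces equality. A product `e_a e_{i+1}` with `a < i` has valuation
above `w_i + w_{i+1}`, hence cannot involve the two new products and lies in `S_i²`; thus
`S_{i-1} S_{i+1} ⊆ S_i²`. Conversely `S_i² ⊆ S_{i-1} S_i + K e_i²`, while `e_{i-1} e_{i+1}` lies
in `S_{i-1} S_{i+1}` but, by valuation, not in `S_{i-1} S_i`; counting dimensions gives
`S_i² = S_{i-1} S_{i+1}`. Finally the minimal divisor of a product `S T` is `D_S + D_T`, the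
minimum at each place being attained by a product of minimizers, so `2 D_i = D_{i-1} + D_{i+1}`.
-/

open Polynomial

noncomputable section

namespace FFF

variable {K : Type*} [Field K] [IsAlgClosed K]

/-- Valuation of a rational function at the finite place `x - α`
(order of vanishing at `x - α`). -/
def vA (α : K) (f : RatFunc K) : ℤ :=
  (Polynomial.rootMultiplicity α f.num : ℤ) - (Polynomial.rootMultiplicity α f.denom : ℤ)

/-- Valuation of a rational function at the place at infinity:
`deg (denominator) - deg (numerator)`. -/
def vInf (f : RatFunc K) : ℤ := -f.intDegree

/-- The places of `K(x)`: `some α` is the finite place at `α ∈ K`, `none` is the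
place at infinity; `plval p` is the associated valuation. -/
def plval (p : Option K) (f : RatFunc K) : ℤ :=
  Option.elim p (vInf f) (fun α => vA α f)

/-- The degree of a rational function, `deg f = -v∞(f)`. -/
def fdeg (f : RatFunc K) : ℤ := f.intDegree

/-- A divisor on `K(x)`: an integer for every place, zero for all but finitely many. -/
abbrev Divisor (K : Type*) [Field K] := Option K →₀ ℤ

/-- The degree of a divisor: the sum of its values. -/
def divDeg (D : Divisor K) : ℤ := D.sum fun _ n => n

/-- The Riemann–Roch space `L(D)` of a divisor `D`. -/
def RRset (D : Divisor K) : Set (RatFunc K) :=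
  {f | f = 0 ∨ ∀ p : Option K, -(D p) ≤ plval p f}

/-- The subfield `K(T)` of `K(x)` generated by the constants `K` and a set `T`. -/
def Kgen (T : Set (RatFunc K)) : Subfield (RatFunc K) :=
  Subfield.closure ((Set.range fun a : K => (RatFunc.C a : RatFunc K)) ∪ T)

/-- The combinatorial genus `γ = dim S² - 2 dim S + 1` of a subspace `S`. -/
def cgenus (S : Submodule K (RatFunc K)) : ℤ :=
  (Module.finrank K ↥(S * S) : ℤ) - 2 * (Module.finrank K ↥S : ℤ) + 1

/-- `sfil e i` is the `i`-th step (1-indexed) of the natural filtration attached to a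
filtered basis `e`: the span of the first `i` basis vectors. -/
def sfil {n : ℕ} (e : Fin n → RatFunc K) (i : ℕ) : Submodule K (RatFunc K) :=
  Submodule.span K (e '' {j | (j : ℕ) < i})

/-- `e` is a filtered basis of `S` with respect to the valuation `v`:
a basis of `S` with strictly decreasing valuations. -/
def IsFilteredBasis {n : ℕ} (v : RatFunc K → ℤ) (S : Submodule K (RatFunc K))
    (e : Fin n → RatFunc K) : Prop :=
  LinearIndependent K e ∧ Submodule.span K (Set.range e) = S ∧
    StrictAnti fun i => v (e i)

/-- `D` is the divisor of least degree with `S ⊆ L(D)`, i.e.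
`D(P) = -min {v_P s : s ∈ S, s ≠ 0}` for every place `P`. -/
def IsMinDivisor (S : Submodule K (RatFunc K)) (D : Divisor K) : Prop :=
  ∀ p : Option K, IsLeast {d : ℤ | ∃ s ∈ S, s ≠ 0 ∧ plval p s = d} (-(D p))

end FFF

namespace FFF

variable {K : Type*} [Field K]

lemma finrank_sup_span_singleton_le {V : Type*} [AddCommGroup V] [Module K V]
    (B : Submodule K V) [FiniteDimensional K B] (u : V) :
    Module.finrank K ↥(B ⊔ K ∙ u) ≤ Module.finrank K B + 1 :=
  (Submodule.finrank_add_le_finrank_add_finrank B _).trans <| by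
    grw [show Module.finrank K (K ∙ u) ≤ 1 by simpa using finrank_span_le_card (R := K) {u}]

lemma vA_eq_of_num_mul_eq (α : K) {f : RatFunc K} {a b : K[X]} (ha : a ≠ 0)
    (h : f.num * b = a * f.denom) :
    vA α f = (rootMultiplicity α a : ℤ) - rootMultiplicity α b := by
  have hne : f.num * b ≠ 0 := h ▸ mul_ne_zero ha f.denom_ne_zero
  have hl := rootMultiplicity_mul (x := α) hne
  rw [h, rootMultiplicity_mul (x := α) (h ▸ hne)] at hl
  unfold vA
  omega

lemma vA_mul (α : K) {f g : RatFunc K} (hf : f ≠ 0) (hg : g ≠ 0) :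
    vA α (f * g) = vA α f + vA α g := by
  have hnum := mul_ne_zero (RatFunc.num_ne_zero hf) (RatFunc.num_ne_zero hg)
  have hden := mul_ne_zero f.denom_ne_zero g.denom_ne_zero
  have h : (f * g).num * (f.denom * g.denom) = f.num * g.num * (f * g).denom :=
    (RatFunc.num_mul_eq_mul_denom_iff hden).mpr <| by
      rw [map_mul, map_mul, mul_div_mul_comm, RatFunc.num_div_denom, RatFunc.num_div_denom]
  rw [vA_eq_of_num_mul_eq α hnum h, rootMultiplicity_mul hnum, rootMultiplicity_mul hden]
  unfold vA
  push_cast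
  ring

lemma min_le_vA_add (α : K) {f g : RatFunc K} (hf : f ≠ 0) (hg : g ≠ 0) (hfg : f + g ≠ 0) :
    min (vA α f) (vA α g) ≤ vA α (f + g) := by
  have hden := mul_ne_zero f.denom_ne_zero g.denom_ne_zero
  have hsum := RatFunc.num_mul_denom_add_denom_mul_num_ne_zero hfg
  rw [vA_eq_of_num_mul_eq α hsum (RatFunc.num_denom_add f g), rootMultiplicity_mul hden]
  have hmin := rootMultiplicity_add α hsum
  rw [rootMultiplicity_mul (mul_ne_zero (RatFunc.num_ne_zero hf) g.denom_ne_zero),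
    rootMultiplicity_mul (mul_ne_zero f.denom_ne_zero (RatFunc.num_ne_zero hg))] at hmin
  unfold vA
  omega

lemma plval_mul (p : Option K) {f g : RatFunc K} (hf : f ≠ 0) (hg : g ≠ 0) :
    plval p (f * g) = plval p f + plval p g := by
  cases p with
  | none =>
    simp only [plval, Option.elim, vInf, RatFunc.intDegree_mul hf hg]
    ring
  | some α => exact vA_mul α hf hg

lemma min_le_plval_add (p : Option K) {f g : RatFunc K} (hf : f ≠ 0) (hg : g ≠ 0)
    (hfg : f + g ≠ 0) : min (plval p f) (plval p g) ≤ plval p (f + g) := by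
  cases p with
  | none =>
    simp only [plval, Option.elim, vInf]
    have := RatFunc.intDegree_add_le hg hfg
    omega
  | some α => exact min_le_vA_add α hf hg hfg

lemma plval_C (p : Option K) (c : K) : plval p (RatFunc.C c) = 0 := by
  cases p <;> simp [plval, vInf, vA, RatFunc.intDegree_C, RatFunc.num_C, RatFunc.denom_C]

lemma plval_smul (p : Option K) {c : K} (hc : c ≠ 0) (f : RatFunc K) :
    plval p (c • f) = plval p f := by
  rcases eq_or_ne f 0 with rfl | hf
  · rw [smul_zero]
  rw [Algebra.smul_def, RatFunc.algebraMap_eq_C,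
    plval_mul p (by simpa using hc) hf, plval_C, zero_add]

def plvalGE (p : Option K) (c : ℤ) : Submodule K (RatFunc K) where
  carrier := {f | f = 0 ∨ c ≤ plval p f}
  zero_mem' := Or.inl rfl
  add_mem' := by
    rintro f g (rfl | hf) (rfl | hg)
    · simp
    · simpa using Or.inr hg
    · simpa using Or.inr hf
    rcases eq_or_ne f 0 with rfl | hf0
    · simpa using Or.inr hg
    rcases eq_or_ne g 0 with rfl | hg0
    · simpa using Or.inr hf
    rcases eq_or_ne (f + g) 0 with hfg | hfg
    · exact Or.inl hfg
    · exact Or.inr ((le_min hf hg).trans (min_le_plval_add p hf0 hg0 hfg))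
  smul_mem' := by
    rintro c f (rfl | hf)
    · simp
    rcases eq_or_ne c 0 with rfl | hc
    · simp
    · exact Or.inr ((plval_smul p hc f).symm ▸ hf)

lemma plvalGE_anti {p : Option K} {c d : ℤ} (h : c ≤ d) : plvalGE p d ≤ plvalGE p c :=
  fun _ hf => hf.imp_right h.trans

lemma plvalGE_mul_le (p : Option K) (c d : ℤ) :
    plvalGE p c * plvalGE p d ≤ plvalGE p (c + d) := by
  rw [Submodule.mul_le]
  rintro f (rfl | hf) g (rfl | hg)
  all_goals try simp
  rcases eq_or_ne f 0 with rfl | hf0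
  · simp
  rcases eq_or_ne g 0 with rfl | hg0
  · simp
  exact Or.inr ((plval_mul p hf0 hg0).symm ▸ add_le_add hf hg)

lemma notMem_plvalGE {p : Option K} {c : ℤ} {f : RatFunc K} (hf : f ≠ 0) (h : plval p f < c) :
    f ∉ plvalGE p c := by
  rintro (rfl | hle)
  exacts [hf rfl, h.not_ge hle]

lemma mem_of_mem_sup_span_singleton {p : Option K} {c : ℤ} {B : Submodule K (RatFunc K)}
    (hB : B ≤ plvalGE p c) {u x : RatFunc K} (hu : plval p u < c) (hx : x ∈ plvalGE p c)
    (hxu : x ∈ B ⊔ K ∙ u) : x ∈ B := by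
  obtain ⟨b, hb, y, hy, rfl⟩ := Submodule.mem_sup.mp hxu
  obtain ⟨d, rfl⟩ := Submodule.mem_span_singleton.mp hy
  rcases eq_or_ne (d • u) 0 with hdu | hdu
  · simpa [hdu] using hb
  have hd : d ≠ 0 := left_ne_zero_of_smul hdu
  have hmem : d • u ∈ plvalGE p c := by
    simpa using sub_mem hx (hB hb)
  exact absurd hmem (notMem_plvalGE hdu (by rwa [plval_smul p hd]))

lemma mul_mem_plvalGE (p : Option K) (f g : RatFunc K) :
    f * g ∈ plvalGE p (plval p f + plval p g) :=
  plvalGE_mul_le p _ _ (Submodule.mul_mem_mul (Or.inr le_rfl) (Or.inr le_rfl))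

lemma sup_span_singleton_mul_le_plvalGE {p : Option K} {B : Submodule K (RatFunc K)}
    {f g : RatFunc K} (hB : B ≤ plvalGE p (plval p f + plval p g)) :
    B ⊔ K ∙ (f * g) ≤ plvalGE p (plval p f + plval p g) :=
  sup_le hB ((Submodule.span_singleton_le_iff_mem _ _).mpr (mul_mem_plvalGE p f g))

lemma lt_sup_span_singleton_of_plval_lt {p : Option K} {c : ℤ} {B : Submodule K (RatFunc K)}
    (hB : B ≤ plvalGE p c) {u : RatFunc K} (hu0 : u ≠ 0) (hu : plval p u < c) :
    B < B ⊔ K ∙ u :=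
  left_lt_sup.mpr fun h => notMem_plvalGE hu0 hu (hB (h (Submodule.mem_span_singleton_self u)))

section Filtration

variable {n : ℕ} (e : Fin n → RatFunc K)

lemma sfil_succ {k : ℕ} (hk : k < n) : sfil e (k + 1) = sfil e k ⊔ K ∙ e ⟨k, hk⟩ := by
  have hset : {j : Fin n | (j : ℕ) < k + 1} = {j : Fin n | (j : ℕ) < k} ∪ {⟨k, hk⟩} := by
    ext j
    simp only [Set.mem_union, Set.mem_singleton_iff, Fin.ext_iff]
    exact Nat.lt_succ_iff_lt_or_eq
  rw [sfil, sfil, hset, Set.image_union, Set.image_singleton, Submodule.span_union]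

lemma sfil_mono {k l : ℕ} (h : k ≤ l) : sfil e k ≤ sfil e l :=
  Submodule.span_mono (Set.image_mono fun _ hj => lt_of_lt_of_le hj h)

variable {e}

lemma mem_sfil {k : ℕ} {j : Fin n} (h : (j : ℕ) < k) : e j ∈ sfil e k :=
  Submodule.subset_span ⟨j, h, rfl⟩

instance (k : ℕ) : FiniteDimensional K (sfil e k) :=
  FiniteDimensional.span_of_finite K ((Set.toFinite _).image e)

instance (k l : ℕ) : FiniteDimensional K ↥(sfil e k * sfil e l) :=
  Module.Finite.iff_fg.mpr
    ((Module.Finite.iff_fg.mp inferInstance).mul (Module.Finite.iff_fg.mp inferInstance))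

lemma finrank_sfil (hli : LinearIndependent K e) {k : ℕ} (hk : k ≤ n) :
    Module.finrank K (sfil e k) = k := by
  have hset : e '' {j | (j : ℕ) < k} = Set.range (e ∘ Fin.castLE hk) := by
    ext x
    constructor
    · rintro ⟨j, hj, rfl⟩
      exact ⟨⟨j.val, hj⟩, rfl⟩
    · rintro ⟨j, rfl⟩
      exact ⟨Fin.castLE hk j, j.isLt, rfl⟩
  rw [sfil, hset, finrank_span_eq_card (hli.comp _ (Fin.castLE_injective hk)),
    Fintype.card_fin]

lemma finrank_sq_sfil_succ_of_cgenus_eq (hli : LinearIndependent K e) {k : ℕ} (hk : k + 1 ≤ n)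
    (hg : cgenus (sfil e (k + 1)) = cgenus (sfil e k)) :
    Module.finrank K ↥(sfil e (k + 1) * sfil e (k + 1)) =
      Module.finrank K ↥(sfil e k * sfil e k) + 2 := by
  unfold cgenus at hg
  rw [finrank_sfil hli hk, finrank_sfil hli (by omega)] at hg
  omega

lemma sfil_le_plvalGE {p : Option K} (hanti : Antitone fun j => plval p (e j)) {k : ℕ}
    (j : Fin n) (hkj : k ≤ j + 1) : sfil e k ≤ plvalGE p (plval p (e j)) :=
  Submodule.span_le.mpr <| by
    rintro _ ⟨l, hl, rfl⟩
    exact Or.inr (hanti (Fin.le_def.mpr (by have hl : (l : ℕ) < k := hl; omega)))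

end Filtration

section NaturalFiltration

variable {n : ℕ} {e : Fin n → RatFunc K} {p : Option K}

lemma sfil_mul_sfil_le_plvalGE (hanti : Antitone fun j => plval p (e j)) {k l : ℕ}
    (a b : Fin n) (hka : k ≤ a + 1) (hlb : l ≤ b + 1) :
    sfil e k * sfil e l ≤ plvalGE p (plval p (e a) + plval p (e b)) :=
  (mul_le_mul' (sfil_le_plvalGE hanti a hka) (sfil_le_plvalGE hanti b hlb)).trans
    (plvalGE_mul_le p _ _)

/-- `e_k e_{k+1}` and `e_{k+1}²` have distinct valuations, both below those of `S_{k+1}²`, so they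
already account for the two extra dimensions. -/
lemma sq_sfil_succ_eq (hli : LinearIndependent K e) (hanti : StrictAnti fun j => plval p (e j))
    {k : ℕ} (hk : k + 2 ≤ n)
    (hfin : Module.finrank K ↥(sfil e (k + 2) * sfil e (k + 2)) =
      Module.finrank K ↥(sfil e (k + 1) * sfil e (k + 1)) + 2) :
    sfil e (k + 2) * sfil e (k + 2) = sfil e (k + 1) * sfil e (k + 1) ⊔
      K ∙ (e ⟨k, by omega⟩ * e ⟨k + 1, hk⟩) ⊔ K ∙ (e ⟨k + 1, hk⟩ * e ⟨k + 1, hk⟩) := by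
  set a : Fin n := ⟨k, by omega⟩
  set b : Fin n := ⟨k + 1, hk⟩
  have hab : plval p (e b) < plval p (e a) := hanti (Fin.mk_lt_mk.mpr k.lt_succ_self)
  have ha := hli.ne_zero a
  have hb := hli.ne_zero b
  have hsq := sfil_mul_sfil_le_plvalGE hanti.antitone a a (k := k + 1) (l := k + 1) le_rfl le_rfl
  have hlt₁ := lt_sup_span_singleton_of_plval_lt hsq (mul_ne_zero ha hb)
    (by rw [plval_mul p ha hb]; omega)
  have hlt₂ := lt_sup_span_singleton_of_plval_lt
    (sup_span_singleton_mul_le_plvalGE (f := e a) (g := e b)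
      (hsq.trans (plvalGE_anti (by omega)))) (mul_ne_zero hb hb) (by rw [plval_mul p hb hb]; omega)
  have hle : sfil e (k + 1) * sfil e (k + 1) ⊔ K ∙ (e a * e b) ⊔ K ∙ (e b * e b) ≤
      sfil e (k + 2) * sfil e (k + 2) := by
    refine sup_le (sup_le (mul_le_mul' (sfil_mono e (by omega)) (sfil_mono e (by omega))) ?_) ?_
    all_goals
      exact (Submodule.span_singleton_le_iff_mem _ _).mpr
        (Submodule.mul_mem_mul (mem_sfil (by simp [a, b])) (mem_sfil (by simp [b])))
  refine (Submodule.eq_of_le_of_finrank_le hle ?_).symm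
  have := Submodule.finrank_lt_finrank_of_lt hlt₁
  have := Submodule.finrank_lt_finrank_of_lt hlt₂
  omega

lemma mem_sq_sfil_of_mem_sq_sfil_succ (hli : LinearIndependent K e)
    (hanti : StrictAnti fun j => plval p (e j)) {k : ℕ} (hk : k + 2 ≤ n)
    (hfin : Module.finrank K ↥(sfil e (k + 2) * sfil e (k + 2)) =
      Module.finrank K ↥(sfil e (k + 1) * sfil e (k + 1)) + 2)
    {x : RatFunc K} (hx : x ∈ sfil e (k + 2) * sfil e (k + 2))
    (hxv : x ∈ plvalGE p (plval p (e ⟨k, by omega⟩) + plval p (e ⟨k + 1, hk⟩) + 1)) :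
    x ∈ sfil e (k + 1) * sfil e (k + 1) := by
  set a : Fin n := ⟨k, by omega⟩
  set b : Fin n := ⟨k + 1, hk⟩
  have hab : plval p (e b) < plval p (e a) := hanti (Fin.mk_lt_mk.mpr k.lt_succ_self)
  have hb := hli.ne_zero b
  have hsq := sfil_mul_sfil_le_plvalGE hanti.antitone a a (k := k + 1) (l := k + 1) le_rfl le_rfl
  rw [sq_sfil_succ_eq hli hanti hk hfin] at hx
  refine mem_of_mem_sup_span_singleton (hsq.trans (plvalGE_anti (by omega))) (u := e a * e b)
    (by rw [plval_mul p (hli.ne_zero a) hb]; omega) hxv ?_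
  refine mem_of_mem_sup_span_singleton (c := plval p (e a) + plval p (e b))
    (sup_span_singleton_mul_le_plvalGE (f := e a) (g := e b) (hsq.trans (plvalGE_anti (by omega))))
    (by rw [plval_mul p hb hb]; omega) (plvalGE_anti (by omega) hxv) hx

lemma sfil_mul_sfil_le_sq (hli : LinearIndependent K e)
    (hanti : StrictAnti fun j => plval p (e j)) {k : ℕ} (hk : k + 2 ≤ n)
    (hfin : Module.finrank K ↥(sfil e (k + 2) * sfil e (k + 2)) =
      Module.finrank K ↥(sfil e (k + 1) * sfil e (k + 1)) + 2) :
    sfil e k * sfil e (k + 2) ≤ sfil e (k + 1) * sfil e (k + 1) := by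
  rw [show k + 2 = k + 1 + 1 from rfl, sfil_succ e (k := k + 1) hk, Submodule.mul_sup]
  refine sup_le (mul_le_mul_left (sfil_mono e k.le_succ) _) ?_
  rw [sfil, Submodule.span_mul_span, Submodule.span_le]
  rintro _ ⟨_, ⟨j, hj, rfl⟩, _, rfl, rfl⟩
  have hj : (j : ℕ) < k := hj
  have hjk : plval p (e ⟨k, by omega⟩) < plval p (e j) := hanti (Fin.mk_lt_mk.mpr hj)
  exact mem_sq_sfil_of_mem_sq_sfil_succ hli hanti hk hfin
    (Submodule.mul_mem_mul (mem_sfil (by omega)) (mem_sfil (by simp)))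
    (plvalGE_anti (by omega) (mul_mem_plvalGE p _ _))

lemma finrank_sq_sfil_succ_le {k : ℕ} (hk : k < n) :
    Module.finrank K ↥(sfil e (k + 1) * sfil e (k + 1)) ≤
      Module.finrank K ↥(sfil e k * sfil e (k + 1)) + 1 := by
  set u := e ⟨k, hk⟩
  have hsplit := sfil_succ e hk
  have hle : sfil e (k + 1) * sfil e (k + 1) ≤ sfil e k * sfil e (k + 1) ⊔ K ∙ (u * u) :=
    calc sfil e (k + 1) * sfil e (k + 1) = (sfil e k ⊔ (K ∙ u)) * sfil e (k + 1) := by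
          rw [← hsplit]
      _ = sfil e k * sfil e (k + 1) ⊔ (K ∙ u) * (sfil e k ⊔ (K ∙ u)) := by
          rw [Submodule.sup_mul, ← hsplit]
      _ = sfil e k * sfil e (k + 1) ⊔ (sfil e k * (K ∙ u) ⊔ K ∙ (u * u)) := by
          rw [Submodule.mul_sup, Submodule.mul_comm (K ∙ u), Submodule.span_mul_span,
            Set.singleton_mul_singleton]
      _ ≤ sfil e k * sfil e (k + 1) ⊔ K ∙ (u * u) := by
          rw [← sup_assoc]
          exact sup_le_sup_right
            (sup_le le_rfl (mul_le_mul_right (le_sup_right.trans_eq hsplit.symm) _)) _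
  exact (Submodule.finrank_mono hle).trans (finrank_sup_span_singleton_le _ _)

lemma finrank_sfil_mul_sfil_lt (hli : LinearIndependent K e)
    (hanti : StrictAnti fun j => plval p (e j)) {k : ℕ} (hk₁ : 1 ≤ k) (hk : k + 2 ≤ n) :
    Module.finrank K ↥(sfil e k * sfil e (k + 1)) <
      Module.finrank K ↥(sfil e k * sfil e (k + 2)) := by
  set a : Fin n := ⟨k - 1, by omega⟩
  set b : Fin n := ⟨k, by omega⟩
  set c : Fin n := ⟨k + 1, hk⟩
  have hbc : plval p (e c) < plval p (e b) := hanti (Fin.mk_lt_mk.mpr k.lt_succ_self)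
  have hlt := lt_sup_span_singleton_of_plval_lt
    (sfil_mul_sfil_le_plvalGE hanti.antitone a b (k := k) (l := k + 1) (by simp [a]; omega) le_rfl)
    (mul_ne_zero (hli.ne_zero a) (hli.ne_zero c))
    (by rw [plval_mul p (hli.ne_zero a) (hli.ne_zero c)]; omega)
  refine Submodule.finrank_lt_finrank_of_lt (hlt.trans_le (sup_le ?_ ?_))
  · exact mul_le_mul_right (sfil_mono e (by omega)) _
  · exact (Submodule.span_singleton_le_iff_mem _ _).mpr
      (Submodule.mul_mem_mul (mem_sfil (by simp [a]; omega)) (mem_sfil (by simp [c])))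

theorem sq_sfil_eq_sfil_mul_sfil (hli : LinearIndependent K e)
    (hanti : StrictAnti fun j => plval p (e j)) {k : ℕ} (hk₁ : 1 ≤ k) (hk : k + 2 ≤ n)
    (hfin : Module.finrank K ↥(sfil e (k + 2) * sfil e (k + 2)) =
      Module.finrank K ↥(sfil e (k + 1) * sfil e (k + 1)) + 2) :
    sfil e (k + 1) * sfil e (k + 1) = sfil e k * sfil e (k + 2) := by
  refine (Submodule.eq_of_le_of_finrank_le (sfil_mul_sfil_le_sq hli hanti hk hfin) ?_).symm
  have := finrank_sq_sfil_succ_le (e := e) (k := k) (by omega)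
  have := finrank_sfil_mul_sfil_lt hli hanti hk₁ hk
  omega

end NaturalFiltration

lemma IsMinDivisor.le_plvalGE {S : Submodule K (RatFunc K)} {D : Divisor K}
    (h : IsMinDivisor S D) (q : Option K) : S ≤ plvalGE q (-(D q)) :=
  fun f hf => (eq_or_ne f 0).imp_right fun hf0 => (h q).2 ⟨f, hf, hf0, rfl⟩

lemma IsMinDivisor.mul {S T : Submodule K (RatFunc K)} {D E : Divisor K}
    (hS : IsMinDivisor S D) (hT : IsMinDivisor T E) : IsMinDivisor (S * T) (D + E) := by
  intro q
  obtain ⟨s, hs, hs0, hsv⟩ := (hS q).1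
  obtain ⟨t, ht, ht0, htv⟩ := (hT q).1
  refine ⟨⟨s * t, Submodule.mul_mem_mul hs ht, mul_ne_zero hs0 ht0, ?_⟩, ?_⟩
  · rw [plval_mul q hs0 ht0, hsv, htv, Finsupp.add_apply, neg_add]
  · rintro _ ⟨x, hx, hx0, rfl⟩
    have := ((mul_le_mul' (hS.le_plvalGE q) (hT.le_plvalGE q)).trans
      (plvalGE_mul_le q _ _) hx).resolve_left hx0
    rwa [Finsupp.add_apply, neg_add]

lemma IsMinDivisor.unique {S : Submodule K (RatFunc K)} {D D' : Divisor K}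
    (h : IsMinDivisor S D) (h' : IsMinDivisor S D') : D = D' :=
  Finsupp.ext fun q => neg_injective ((h q).unique (h' q))

end FFF

namespace FFF

variable {K : Type*} [Field K] [IsAlgClosed K]

theorem statement9_general (n : ℕ) (S : Submodule K (RatFunc K))
    (p : Option K) (e : Fin n → RatFunc K)
    (hbasis : IsFilteredBasis (plval p) S e)
    (D : ℕ → Divisor K)
    (hD : ∀ j : ℕ, 1 ≤ j → j ≤ n → IsMinDivisor (sfil e j) (D j))
    (i : ℕ) (hi2 : 2 ≤ i) (hin : i + 1 ≤ n)
    (hg : cgenus (sfil e (i + 1)) = cgenus (sfil e i)) :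
    (sfil e i * sfil e i : Submodule K (RatFunc K)) = sfil e (i - 1) * sfil e (i + 1) ∧
    ∀ q : Option K, D (i + 1) q - D i q = D i q - D (i - 1) q := by
  obtain ⟨hli, -, hanti⟩ := hbasis
  obtain ⟨k, rfl⟩ : ∃ k, i = k + 1 := ⟨i - 1, by omega⟩
  have hsq : sfil e (k + 1) * sfil e (k + 1) = sfil e k * sfil e (k + 2) :=
    sq_sfil_eq_sfil_mul_sfil hli hanti (by omega) hin
      (finrank_sq_sfil_succ_of_cgenus_eq hli hin hg)
  refine ⟨hsq, fun q => ?_⟩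
  have hdiv : D (k + 1) + D (k + 1) = D k + D (k + 2) :=
    ((hD _ (by omega) (by omega)).mul (hD _ (by omega) (by omega))).unique
      (hsq ▸ (hD _ (by omega) (by omega)).mul (hD _ (by omega) hin))
  have hq := DFunLike.congr_fun hdiv q
  rw [Finsupp.add_apply, Finsupp.add_apply] at hq
  show D (k + 2) q - D (k + 1) q = D (k + 1) q - D k q
  omega

/-- If `2 ≤ i ≤ n - 1` and `γ_{i+1} = γ_i` then `S_i² = S_{i-1}·S_{i+1}`
and `D_{i+1}(P) - D_i(P) = D_i(P) - D_{i-1}(P)` for every place `P`. -/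
theorem statement9 (n : ℕ) (S : Submodule K (RatFunc K))
    (hdim : Module.finrank K ↥S = n)
    (p : Option K) (e : Fin n → RatFunc K)
    (hbasis : IsFilteredBasis (plval p) S e)
    (D : ℕ → Divisor K)
    (hD : ∀ j : ℕ, 1 ≤ j → j ≤ n → IsMinDivisor (sfil e j) (D j))
    (i : ℕ) (hi2 : 2 ≤ i) (hin : i + 1 ≤ n)
    (hg : cgenus (sfil e (i + 1)) = cgenus (sfil e i)) :
    (sfil e i * sfil e i : Submodule K (RatFunc K)) = sfil e (i - 1) * sfil e (i + 1) ∧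
    ∀ q : Option K, D (i + 1) q - D i q = D i q - D (i - 1) q :=
  statement9_general n S p e hbasis D hD i hi2 hin hg

end FFF
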